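/- Let a(s,s') ∈ {1, q} be edge gains on a strongly connected finite directed graph with maximal ratio τ (the error edges, with gain 1, have maximal cycle-density τ), and define W(k,s) = min over all walks of length k starting at s of the product of edge gains, with q > 1. Then q^{k − τk − |S|} < W(k,s) < q^{k − τk + l + |S|} where l is the length of the maximal-ratio cycle, and hence lim_{k→∞} (1/k) log_q W(k,s) = 1 − τ for every s. -/

import Mathlib

/-- `s` is a walk of length `n` in the graph with edge relation `A`. -/
def IsWalk {V : Type*} (A : V → V → Prop) (s : ℕ → V) (n : ℕ) : Prop :=
  ∀ i < n, A (s i) (s (i + 1))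

/-- `s` is a simple cycle of length `l`. -/
def IsCycle {V : Type*} (A : V → V → Prop) (s : ℕ → V) (l : ℕ) : Prop :=
  0 < l ∧ IsWalk A s l ∧ s l = s 0 ∧ Function.Injective (fun i : Fin l => s i.val)

/-- Number of error edges in the first `n` steps of the walk `s`. -/
def errCount {V : Type*} (lab : V → V → Bool) (s : ℕ → V) (n : ℕ) : ℕ :=
  ((Finset.range n).filter (fun i => lab (s i) (s (i + 1)) = true)).card


/-!
Every walk of length `k` splits, by repeatedly cutting out simple cycles, into simple cycles
and a residual walk of length `< |V|`. Each simple cycle has error density at most `τ`, so a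
walk carries fewer than `τk + |V|` error edges. Conversely, from any state one reaches the
maximal-ratio cycle within `|V|` steps and then loops around it, which yields a walk with more
than `τk − l − |V|` error edges. Since the gain product of a walk is `q^{k − E}`, taking
`log_q` and dividing by `k` gives the limit `1 − τ`.
-/

open Filter Topology

section

variable {V : Type*} {A : V → V → Prop}

theorem isWalk_add {s : ℕ → V} {a b : ℕ} :
    IsWalk A s (a + b) ↔ IsWalk A s a ∧ IsWalk A (fun x => s (a + x)) b := by
  refine ⟨fun h => ⟨fun i hi => h i (by omega), fun i hi => h (a + i) (by omega)⟩, ?_⟩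
  rintro ⟨ha, hb⟩ i hi
  rcases Nat.lt_or_ge i a with h | h
  · exact ha i h
  · obtain ⟨j, rfl⟩ := Nat.exists_eq_add_of_le h
    exact hb j (by omega)

theorem IsWalk.mono {s : ℕ → V} {m n : ℕ} (h : IsWalk A s n) (hmn : m ≤ n) : IsWalk A s m :=
  fun i hi => h i (by omega)

theorem IsWalk.congr {s s' : ℕ → V} {n : ℕ} (h : IsWalk A s n) (hss' : ∀ x ≤ n, s x = s' x) :
    IsWalk A s' n := fun i hi => by
  rw [← hss' i hi.le, ← hss' (i + 1) hi]
  exact h i hi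

theorem isWalk_mul_of_periodic {s : ℕ → V} {l : ℕ} (hs : Function.Periodic s l)
    (h : IsWalk A s l) (n : ℕ) : IsWalk A s (n * l) := by
  induction n with
  | zero => simpa using h.mono (Nat.zero_le l)
  | succ n ih =>
    rw [Nat.succ_mul, isWalk_add]
    refine ⟨ih, ?_⟩
    convert h using 2 with x
    rw [add_comm]
    exact hs.nat_mul n x

section errCount

variable {lab : V → V → Bool}

theorem errCount_le (s : ℕ → V) (n : ℕ) : errCount lab s n ≤ n :=
  (Finset.card_filter_le _ _).trans (Finset.card_range n).le

theorem errCount_mono (s : ℕ → V) {m n : ℕ} (h : m ≤ n) : errCount lab s m ≤ errCount lab s n :=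
  Finset.card_le_card (Finset.filter_subset_filter _ (Finset.range_subset_range.mpr h))

theorem errCount_congr {s s' : ℕ → V} {n : ℕ} (h : ∀ x ≤ n, s x = s' x) :
    errCount lab s n = errCount lab s' n := by
  refine congrArg Finset.card (Finset.filter_congr fun x hx => ?_)
  rw [Finset.mem_range] at hx
  rw [h x hx.le, h (x + 1) hx]

theorem errCount_add (s : ℕ → V) (a b : ℕ) :
    errCount lab s (a + b) = errCount lab s a + errCount lab (fun x => s (a + x)) b := by
  unfold errCount
  rw [Finset.range_add, Finset.filter_union, Finset.card_union_of_disjoint, Finset.filter_map,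
    Finset.card_map]
  · rfl
  · refine Finset.disjoint_filter_filter (Finset.disjoint_left.mpr fun x hx hx' => ?_)
    simp only [Finset.mem_range, Finset.mem_map, addLeftEmbedding_apply] at hx hx'
    omega

theorem errCount_mul_of_periodic {s : ℕ → V} {l : ℕ} (hs : Function.Periodic s l) (n : ℕ) :
    errCount lab s (n * l) = n * errCount lab s l := by
  induction n with
  | zero => simp [errCount]
  | succ n ih =>
    have hshift : (fun x => s (n * l + x)) = s := funext fun x => by
      rw [add_comm]
      exact hs.nat_mul n x
    rw [Nat.succ_mul, errCount_add, ih, hshift, Nat.succ_mul]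

theorem prod_gain_eq_rpow (q : ℝ) (σ : ℕ → V) (k : ℕ) :
    ∏ i ∈ Finset.range k, (if lab (σ i) (σ (i + 1)) then (1 : ℝ) else q) =
      q ^ ((k : ℝ) - errCount lab σ k) := by
  have hsplit := Finset.card_filter_add_card_filter_not
    (s := Finset.range k) (p := fun i => lab (σ i) (σ (i + 1)) = true)
  rw [Finset.card_range] at hsplit
  rw [Finset.prod_ite, Finset.prod_const_one, one_mul, Finset.prod_const, ← Real.rpow_natCast]
  congr 1
  rw [errCount, eq_sub_iff_add_eq, ← Nat.cast_add, add_comm, hsplit]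

end errCount

def walkAppend (p : ℕ → V) (m : ℕ) (r : ℕ → V) : ℕ → V :=
  fun x => if x ≤ m then p x else r (x - m)

section walkAppend

variable {p r : ℕ → V} {m : ℕ}

theorem walkAppend_of_le {x : ℕ} (h : x ≤ m) : walkAppend p m r x = p x := if_pos h

theorem walkAppend_add (hpr : p m = r 0) (x : ℕ) : walkAppend p m r (m + x) = r x := by
  unfold walkAppend
  split_ifs with h
  · obtain rfl : x = 0 := by omega
    exact hpr
  · rw [Nat.add_sub_cancel_left]

theorem IsWalk.append (hpr : p m = r 0) {n : ℕ} (hp : IsWalk A p m) (hr : IsWalk A r n) :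
    IsWalk A (walkAppend p m r) (m + n) :=
  isWalk_add.2 ⟨hp.congr fun _ hx => (walkAppend_of_le hx).symm,
    hr.congr fun x _ => (walkAppend_add hpr x).symm⟩

theorem errCount_walkAppend {lab : V → V → Bool} (hpr : p m = r 0) (n : ℕ) :
    errCount lab (walkAppend p m r) (m + n) = errCount lab p m + errCount lab r n := by
  rw [errCount_add, errCount_congr fun _ hx => walkAppend_of_le hx,
    funext (walkAppend_add hpr)]

end walkAppend

theorem IsWalk.exists_cut {σ : ℕ → V} {i d r : ℕ} (hσ : IsWalk A σ (i + d + r))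
    (hclosed : σ (i + d) = σ i) :
    ∃ σ', IsWalk A σ' (i + r) ∧ σ' 0 = σ 0 ∧ σ' (i + r) = σ (i + d + r) ∧
      ∀ lab, errCount lab σ (i + d + r) =
        errCount lab σ' (i + r) + errCount lab (fun x => σ (i + x)) d := by
  have hpr : σ i = σ (i + d + 0) := hclosed.symm
  obtain ⟨hσid, hrest⟩ := isWalk_add.1 hσ
  refine ⟨walkAppend σ i (fun x => σ (i + d + x)), (hσid.mono (by omega)).append hpr hrest,
    walkAppend_of_le (Nat.zero_le i), walkAppend_add hpr r, fun lab => ?_⟩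
  rw [errCount_walkAppend hpr, errCount_add, errCount_add σ i d]
  simp only [add_assoc]
  ring

/-- The first revisit of a vertex closes a simple cycle. -/
theorem IsWalk.exists_isCycle_segment [Fintype V] {σ : ℕ → V} {k : ℕ} (hσ : IsWalk A σ k)
    (hk : Fintype.card V ≤ k) :
    ∃ i d, i + d ≤ k ∧ IsCycle A (fun x => σ (i + x)) d := by
  classical
  obtain ⟨a, b, hab, hσab⟩ := Fintype.exists_ne_map_eq_of_card_lt
    (fun x : Fin (Fintype.card V + 1) => σ x) (by simp)
  obtain ⟨j₀, hj₀, hrep⟩ : ∃ j ≤ Fintype.card V, ∃ i < j, σ i = σ j := by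
    rcases lt_or_gt_of_ne (Fin.val_ne_of_ne hab) with h | h
    · exact ⟨b, by omega, a, h, hσab⟩
    · exact ⟨a, by omega, b, h, hσab.symm⟩
  have hrepeat : ∃ j, ∃ i < j, σ i = σ j := ⟨j₀, hrep⟩
  have hjk : Nat.find hrepeat ≤ k := (Nat.find_min' hrepeat hrep).trans (hj₀.trans hk)
  obtain ⟨i, hij, hσij⟩ := Nat.find_spec hrepeat
  refine ⟨i, Nat.find hrepeat - i, by omega, by omega, fun x hx => hσ (i + x) (by omega),
    by simp only [Nat.add_sub_cancel' hij.le, ← hσij, add_zero], fun x y hxy => ?_⟩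
  by_contra hne
  rcases lt_or_gt_of_ne (Fin.val_ne_of_ne hne) with h | h
  · exact Nat.find_min hrepeat (show i + y < Nat.find hrepeat by omega) ⟨i + x, by omega, hxy⟩
  · exact Nat.find_min hrepeat (show i + x < Nat.find hrepeat by omega) ⟨i + y, by omega, hxy.symm⟩

theorem IsWalk.exists_remove_cycle [Fintype V] {σ : ℕ → V} {k : ℕ} (hσ : IsWalk A σ k)
    (hk : Fintype.card V ≤ k) :
    ∃ k' d σ' c, k = k' + d ∧ IsCycle A c d ∧ IsWalk A σ' k' ∧ σ' 0 = σ 0 ∧ σ' k' = σ k ∧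
      ∀ lab, errCount lab σ k = errCount lab σ' k' + errCount lab c d := by
  obtain ⟨i, d, hidk, hcyc⟩ := hσ.exists_isCycle_segment hk
  obtain ⟨r, rfl⟩ := Nat.exists_eq_add_of_le hidk
  obtain ⟨σ', hσ', h0, hend, herr⟩ := hσ.exists_cut hcyc.2.2.1
  exact ⟨i + r, d, σ', _, by ring, hcyc, hσ', h0, hend, herr⟩

theorem IsWalk.exists_lt_card [Fintype V] {σ : ℕ → V} {k : ℕ} (hσ : IsWalk A σ k) :
    ∃ m p, m < Fintype.card V ∧ IsWalk A p m ∧ p 0 = σ 0 ∧ p m = σ k := by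
  induction k using Nat.strong_induction_on generalizing σ with
  | _ k ih =>
    rcases Nat.lt_or_ge k (Fintype.card V) with hk | hk
    · exact ⟨k, σ, hk, hσ, rfl, rfl⟩
    obtain ⟨k', d, σ', _c, rfl, hcyc, hσ', h0, hend, -⟩ := hσ.exists_remove_cycle hk
    obtain ⟨m, p, hm, hp, hp0, hpm⟩ := ih k' (by have := hcyc.1; omega) hσ'
    exact ⟨m, p, hm, hp, hp0.trans h0, hpm.trans hend⟩

theorem errCount_lt_of_isWalk [Fintype V] {lab : V → V → Bool} {τ : ℝ} (hτ : 0 ≤ τ)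
    (hub : ∀ s l, IsCycle A s l → (errCount lab s l : ℝ) ≤ τ * l)
    {σ : ℕ → V} {k : ℕ} (hσ : IsWalk A σ k) :
    (errCount lab σ k : ℝ) < τ * k + Fintype.card V := by
  induction k using Nat.strong_induction_on generalizing σ with
  | _ k ih =>
    rcases Nat.lt_or_ge k (Fintype.card V) with hk | hk
    · have hE : (errCount lab σ k : ℝ) ≤ k := by exact_mod_cast errCount_le σ k
      have hkV : (k : ℝ) < Fintype.card V := by exact_mod_cast hk
      have : 0 ≤ τ * k := by positivity
      linarith
    obtain ⟨k', d, σ', c, rfl, hcyc, hσ', -, -, herr⟩ := hσ.exists_remove_cycle hk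
    have hres := ih k' (by have := hcyc.1; omega) hσ'
    have hc := hub c d hcyc
    rw [herr lab]
    push_cast
    linarith

theorem periodic_apply_mod (c : ℕ → V) (l : ℕ) : Function.Periodic (fun x => c (x % l)) l :=
  fun x => by simp

theorem IsCycle.apply_mod_of_le {c : ℕ → V} {l : ℕ} (hc : IsCycle A c l) {x : ℕ} (hx : x ≤ l) :
    c x = c (x % l) := by
  rcases hx.lt_or_eq with hx | rfl
  · rw [Nat.mod_eq_of_lt hx]
  · rw [Nat.mod_self, hc.2.2.1]

theorem IsCycle.isWalk_mod {c : ℕ → V} {l : ℕ} (hc : IsCycle A c l) (n : ℕ) :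
    IsWalk A (fun x => c (x % l)) n :=
  (isWalk_mul_of_periodic (periodic_apply_mod c l) (hc.2.1.congr fun _ => hc.apply_mod_of_le)
    n).mono (Nat.le_mul_of_pos_right n hc.1)

theorem IsCycle.errCount_mod {c : ℕ → V} {l : ℕ} (hc : IsCycle A c l) (lab : V → V → Bool)
    (n : ℕ) : errCount lab (fun x => c (x % l)) (n * l) = n * errCount lab c l := by
  rw [errCount_mul_of_periodic (periodic_apply_mod c l),
    errCount_congr fun _ => hc.apply_mod_of_le]

/-- Walk to the cycle `c` in fewer than `|V|` steps, then loop around `c` forever. -/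
theorem exists_walk_lt_errCount [Fintype V] {lab : V → V → Bool} {c : ℕ → V} {l : ℕ}
    (hc : IsCycle A c l) {τ : ℝ} (hτ : 0 ≤ τ) (hdens : τ * l ≤ errCount lab c l) {s₀ : V}
    (hreach : ∃ m p, IsWalk A p m ∧ p 0 = s₀ ∧ p m = c 0) (k : ℕ) :
    ∃ σ, IsWalk A σ k ∧ σ 0 = s₀ ∧ τ * k - l - Fintype.card V < errCount lab σ k := by
  obtain ⟨m₀, p₀, hp₀, rfl, hp₀m⟩ := hreach
  obtain ⟨m, p, hm, hp, hp0, hpm⟩ := hp₀.exists_lt_card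
  set cyc : ℕ → V := fun x => c (x % l)
  have hpr : p m = cyc 0 := by simp [cyc, hpm, hp₀m]
  set σ := walkAppend p m cyc
  refine ⟨σ, (hp.append hpr (hc.isWalk_mod k)).mono (by omega),
    (walkAppend_of_le (Nat.zero_le m)).trans hp0, ?_⟩
  set n := k / l
  have hnk : n * l ≤ k := Nat.div_mul_le_self k l
  have hcount : n * errCount lab c l ≤ errCount lab σ k + m :=
    calc n * errCount lab c l = errCount lab cyc (n * l) := (hc.errCount_mod lab n).symm
      _ ≤ errCount lab σ (m + n * l) := by rw [errCount_walkAppend hpr]; omega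
      _ ≤ errCount lab σ (k + m) := errCount_mono σ (by omega)
      _ ≤ errCount lab σ k + m := by
        rw [errCount_add]
        exact Nat.add_le_add_left (errCount_le _ m) _
  have hk : (k : ℝ) ≤ (n + 1) * l := by
    have : (k : ℝ) < n * l + l := by exact_mod_cast Nat.lt_div_mul_add hc.1
    linarith
  have hcount' : (n : ℝ) * errCount lab c l ≤ errCount lab σ k + m := by exact_mod_cast hcount
  have hel : (errCount lab c l : ℝ) ≤ l := by exact_mod_cast errCount_le c l
  have hmV : (m : ℝ) < Fintype.card V := by exact_mod_cast hm
  have hτk : τ * k ≤ (n + 1) * errCount lab c l :=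
    calc τ * k ≤ τ * ((n + 1) * l) := mul_le_mul_of_nonneg_left hk hτ
      _ = (n + 1) * (τ * l) := by ring
      _ ≤ (n + 1) * errCount lab c l := mul_le_mul_of_nonneg_left hdens (by positivity)
  linarith

end

theorem tendsto_div_natCast_of_bounded_sub_mul {x : ℕ → ℝ} {a C D : ℝ}
    (hlo : ∀ k : ℕ, a * k - C ≤ x k) (hhi : ∀ k : ℕ, x k ≤ a * k + D) :
    Tendsto (fun k : ℕ => x k / k) atTop (𝓝 a) := by
  have hC : Tendsto (fun k : ℕ => a - C / k) atTop (𝓝 a) := by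
    simpa using (tendsto_const_div_atTop_nhds_zero_nat C).const_sub a
  have hD : Tendsto (fun k : ℕ => a + D / k) atTop (𝓝 a) := by
    simpa using (tendsto_const_div_atTop_nhds_zero_nat D).const_add a
  refine tendsto_of_tendsto_of_tendsto_of_le_of_le' hC hD ?_ ?_ <;>
    filter_upwards [eventually_gt_atTop 0] with k hk <;>
    have hk' : (0 : ℝ) < k := by exact_mod_cast hk
  · rw [le_div_iff₀ hk', sub_mul, div_mul_cancel₀ _ hk'.ne']
    exact hlo k
  · rw [div_le_iff₀ hk', add_mul, div_mul_cancel₀ _ hk'.ne']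
    exact hhi k

theorem stmt19_general {V : Type*} [Fintype V]
    (A : V → V → Prop) (lab : V → V → Bool)
    (q : ℝ) (hq : 1 < q)
    (hsc : ∀ u v : V, ∃ (m : ℕ) (s : ℕ → V), IsWalk A s m ∧ s 0 = u ∧ s m = v)
    (c : ℕ → V) (l e : ℕ) (hc : IsCycle A c l) (he : errCount lab c l = e)
    (τ : ℝ) (hτ : τ = (e : ℝ) / l)
    (hub : ∀ (s : ℕ → V) (l' : ℕ), IsCycle A s l' → (errCount lab s l' : ℝ) ≤ τ * l')
    (W : ℕ → V → ℝ)
    (hW : ∀ (k : ℕ) (s₀ : V), IsLeast {x : ℝ | ∃ σ : ℕ → V, IsWalk A σ k ∧ σ 0 = s₀ ∧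
      x = ∏ i ∈ Finset.range k, (if lab (σ i) (σ (i + 1)) then (1 : ℝ) else q)} (W k s₀)) :
    (∀ (k : ℕ) (s₀ : V),
      q ^ ((k : ℝ) - τ * k - (Fintype.card V : ℝ)) < W k s₀ ∧
      W k s₀ < q ^ ((k : ℝ) - τ * k + (l : ℝ) + (Fintype.card V : ℝ))) ∧
    ∀ s₀ : V, Filter.Tendsto (fun k : ℕ => Real.logb q (W k s₀) / k)
      Filter.atTop (nhds (1 - τ)) := by
  have hτ0 : 0 ≤ τ := hτ ▸ by positivity
  have hdens : τ * l ≤ errCount lab c l := by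
    rw [hτ, he, div_mul_cancel₀ _ (by exact_mod_cast hc.1.ne')]
  have hlower (k : ℕ) (s₀ : V) : q ^ ((k : ℝ) - τ * k - Fintype.card V) < W k s₀ := by
    obtain ⟨σ, hσ, -, hWσ⟩ := (hW k s₀).1
    rw [hWσ, prod_gain_eq_rpow]
    exact Real.rpow_lt_rpow_of_exponent_lt hq (by linarith [errCount_lt_of_isWalk hτ0 hub hσ])
  have hupper (k : ℕ) (s₀ : V) :
      W k s₀ < q ^ ((k : ℝ) - τ * k + l + Fintype.card V) := by
    obtain ⟨σ, hσ, hσ0, hE⟩ := exists_walk_lt_errCount hc hτ0 hdens (hsc s₀ (c 0)) k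
    refine ((hW k s₀).2 ⟨σ, hσ, hσ0, rfl⟩).trans_lt ?_
    rw [prod_gain_eq_rpow]
    exact Real.rpow_lt_rpow_of_exponent_lt hq (by linarith)
  refine ⟨fun k s₀ => ⟨hlower k s₀, hupper k s₀⟩, fun s₀ => ?_⟩
  have hWpos (k : ℕ) : 0 < W k s₀ := (Real.rpow_pos_of_pos (by linarith) _).trans (hlower k s₀)
  refine tendsto_div_natCast_of_bounded_sub_mul (C := Fintype.card V) (D := l + Fintype.card V)
    (fun k => ?_) (fun k => ?_)
  · have := ((Real.lt_logb_iff_rpow_lt hq (hWpos k)).2 (hlower k s₀)).le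
    linarith
  · have := ((Real.logb_lt_iff_lt_rpow hq (hWpos k)).2 (hupper k s₀)).le
    linarith

/-- Dynamic-programming value `W(k,s)` (minimum over walks of length `k` from `s` of the
product of edge gains, gain `1` for error edges and `q` for error-free edges) satisfies
`q^{k−τk−|S|} < W(k,s) < q^{k−τk+l+|S|}`, whence `(1/k) log_q W(k,s) → 1 − τ`. -/
theorem stmt19 {V : Type*} [Fintype V] [Nonempty V]
    (A : V → V → Prop) (lab : V → V → Bool)
    (q : ℝ) (hq : 1 < q)
    (hsc : ∀ u v : V, ∃ (m : ℕ) (s : ℕ → V), IsWalk A s m ∧ s 0 = u ∧ s m = v)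
    (hout : ∀ v : V, ∃ v', A v v')
    (c : ℕ → V) (l e : ℕ) (hc : IsCycle A c l) (he : errCount lab c l = e)
    (τ : ℝ) (hτ : τ = (e : ℝ) / l)
    (hub : ∀ (s : ℕ → V) (l' : ℕ), IsCycle A s l' → (errCount lab s l' : ℝ) ≤ τ * l')
    (W : ℕ → V → ℝ)
    (hW : ∀ (k : ℕ) (s₀ : V), IsLeast {x : ℝ | ∃ σ : ℕ → V, IsWalk A σ k ∧ σ 0 = s₀ ∧
      x = ∏ i ∈ Finset.range k, (if lab (σ i) (σ (i + 1)) then (1 : ℝ) else q)} (W k s₀)) :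
    (∀ (k : ℕ) (s₀ : V),
      q ^ ((k : ℝ) - τ * k - (Fintype.card V : ℝ)) < W k s₀ ∧
      W k s₀ < q ^ ((k : ℝ) - τ * k + (l : ℝ) + (Fintype.card V : ℝ))) ∧
    ∀ s₀ : V, Filter.Tendsto (fun k : ℕ => Real.logb q (W k s₀) / k)
      Filter.atTop (nhds (1 - τ)) :=
  stmt19_general A lab q hq hsc c l e hc he τ hτ hub W hW
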